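/- arXiv:1907.02658 — 2 statements merged into one kernel-verified Lean document; each statement's English description precedes it below -/
import Mathlib

section
/- Let Z⁺, Z⁻ > 0 and v±, T± real. With q⁺ = (Z⁺ v⁺ + T⁺)/2, p⁻ = (Z⁻ v⁻ − T⁻)/2 and the interface hat-variables T̂, v̂⁺, v̂⁻ as defined by the locked-interface Riemann solver, define p̂⁺ = (Z⁺ v̂⁺ − T̂)/2 and q̂⁻ = (Z⁻ v̂⁻ + T̂)/2. Then (q⁺)² − (p̂⁺)² = Z⁺ T̂ v̂⁺ and (p⁻)² − (q̂⁻)² = −Z⁻ T̂ v̂⁻. -/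
/-!
The solver's traction is exactly the one for which the two one-sided velocities coincide,
`v̂⁺ = v̂⁻ = v̂`. The formula for `v̂⁻` then says that the incoming characteristic is preserved,
`q⁺ = (Z⁺ v̂ + T̂)/2`, and likewise `p⁻ = (Z⁻ v̂ − T̂)/2`; each identity is then the difference of
squares `((a + b)/2)² − ((a − b)/2)² = a b`.
-/

noncomputable def lockedTraction {K : Type*} [Field K] (Zp Zm q p : K) : K :=
  Zp * Zm / (Zp + Zm) * (2 * q / Zp - 2 * p / Zm)

theorem lockedTraction_velocity_eq {K : Type*} [Field K] {Zp Zm : K} (hZp : Zp ≠ 0)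
    (hZm : Zm ≠ 0) (hZ : Zp + Zm ≠ 0) (q p : K) :
    (2 * p + lockedTraction Zp Zm q p) / Zm = (2 * q - lockedTraction Zp Zm q p) / Zp := by
  unfold lockedTraction
  field_simp
  ring

theorem locked_interface_characteristic_identities_general (Zp Zm : ℝ)
    (hZp : 0 < Zp) (hZm : 0 < Zm)
    (qp pm That vhatp vhatm phatp qhatm : ℝ)
    (hT : That = (Zp * Zm / (Zp + Zm)) * (2 * qp / Zp - 2 * pm / Zm))
    (hvp : vhatp = (2 * pm + That) / Zm)
    (hvm : vhatm = (2 * qp - That) / Zp)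
    (hphatp : phatp = (Zp * vhatp - That) / 2)
    (hqhatm : qhatm = (Zm * vhatm + That) / 2) :
    qp ^ 2 - phatp ^ 2 = Zp * That * vhatp ∧
    pm ^ 2 - qhatm ^ 2 = -(Zm * That * vhatm) := by
  have hlocked : vhatp = vhatm := by
    rw [hvp, hvm, hT]
    exact lockedTraction_velocity_eq hZp.ne' hZm.ne' (by positivity) qp pm
  have hq : qp = (Zp * vhatp + That) / 2 := by
    rw [hlocked, hvm]
    field_simp
    ring
  have hp : pm = (Zm * vhatm - That) / 2 := by
    rw [← hlocked, hvp]
    field_simp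
    ring
  constructor
  · rw [hq, hphatp]
    ring
  · rw [hp, hqhatm]
    ring

theorem locked_interface_characteristic_identities (Zp Zm vp vm Tp Tm : ℝ)
    (hZp : 0 < Zp) (hZm : 0 < Zm)
    (qp pm That vhatp vhatm phatp qhatm : ℝ)
    (hqp : qp = (Zp * vp + Tp) / 2)
    (hpm : pm = (Zm * vm - Tm) / 2)
    (hT : That = (Zp * Zm / (Zp + Zm)) * (2 * qp / Zp - 2 * pm / Zm))
    (hvp : vhatp = (2 * pm + That) / Zm)
    (hvm : vhatm = (2 * qp - That) / Zp)
    (hphatp : phatp = (Zp * vhatp - That) / 2)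
    (hqhatm : qhatm = (Zm * vhatm + That) / 2) :
    qp ^ 2 - phatp ^ 2 = Zp * That * vhatp ∧
    pm ^ 2 - qhatm ^ 2 = -(Zm * That * vhatm) :=
  locked_interface_characteristic_identities_general Zp Zm hZp hZm qp pm That vhatp vhatm phatp
    qhatm hT hvp hvm hphatp hqhatm
end

section
/- Let Z⁺, Z⁻ > 0, v±, T± real, with the locked-interface hat-variables T̂, v̂⁺, v̂⁻ as defined by the Riemann solver, and p̂⁺ = (Z⁺ v̂⁺ − T̂)/2, q̂⁻ = (Z⁻ v̂⁻ + T̂)/2. Then (1/Z⁺)((q⁺)² − (p̂⁺)²) + (1/Z⁻)((p⁻)² − (q̂⁻)²) = T̂ (v̂⁺ − v̂⁻) = 0. -/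
/-!
The Riemann solver locks the interface: the hat velocities on the two sides coincide,
because `T̂ (1/Z⁺ + 1/Z⁻) = 2q⁺/Z⁺ - 2p⁻/Z⁻`. Writing `v̂` for the common value, both the
incoming and the outgoing characteristics on each side are `(Z v̂ ± T̂)/2`, and the identity
`(1/Z)(((Z v + T)/2)² - ((Z v - T)/2)²) = T v` makes the two sides contribute `T̂ v̂` and
`-T̂ v̂`.
-/

theorem characteristic_energy_flux {Z : ℝ} (hZ : Z ≠ 0) (v T : ℝ) :
    (1 / Z) * (((Z * v + T) / 2) ^ 2 - ((Z * v - T) / 2) ^ 2) = T * v := by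
  field_simp
  ring

theorem locked_interface_velocity_eq {Zp Zm qp pm T : ℝ} (hZp : Zp ≠ 0) (hZm : Zm ≠ 0)
    (hZ : Zp + Zm ≠ 0) (hT : T = (Zp * Zm / (Zp + Zm)) * (2 * qp / Zp - 2 * pm / Zm)) :
    (2 * pm + T) / Zm = (2 * qp - T) / Zp := by
  subst hT
  field_simp
  ring

theorem locked_interface_energy_term_vanishes_general (Zp Zm : ℝ)
    (hZp : 0 < Zp) (hZm : 0 < Zm)
    (qp pm That vhatp vhatm phatp qhatm : ℝ)
    (hT : That = (Zp * Zm / (Zp + Zm)) * (2 * qp / Zp - 2 * pm / Zm))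
    (hvp : vhatp = (2 * pm + That) / Zm)
    (hvm : vhatm = (2 * qp - That) / Zp)
    (hphatp : phatp = (Zp * vhatp - That) / 2)
    (hqhatm : qhatm = (Zm * vhatm + That) / 2) :
    (1 / Zp) * (qp ^ 2 - phatp ^ 2) + (1 / Zm) * (pm ^ 2 - qhatm ^ 2)
      = That * (vhatp - vhatm) ∧
    That * (vhatp - vhatm) = 0 := by
  have hlock : vhatp = vhatm := by
    rw [hvp, hvm]
    exact locked_interface_velocity_eq hZp.ne' hZm.ne' (by positivity) hT
  have hqp : qp = (Zp * vhatp + That) / 2 := by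
    rw [hlock, hvm]
    field_simp [hZp.ne']
    ring
  have hpm : pm = (Zm * vhatp - That) / 2 := by
    rw [hvp]
    field_simp [hZm.ne']
    ring
  have hwork : That * (vhatp - vhatm) = 0 := by rw [hlock, sub_self, mul_zero]
  refine ⟨?_, hwork⟩
  rw [hwork, hqp, hphatp, hpm, hqhatm, ← hlock]
  linear_combination characteristic_energy_flux hZp.ne' vhatp That -
    characteristic_energy_flux hZm.ne' vhatp That

theorem locked_interface_energy_term_vanishes (Zp Zm vp vm Tp Tm : ℝ)
    (hZp : 0 < Zp) (hZm : 0 < Zm)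
    (qp pm That vhatp vhatm phatp qhatm : ℝ)
    (hqp : qp = (Zp * vp + Tp) / 2)
    (hpm : pm = (Zm * vm - Tm) / 2)
    (hT : That = (Zp * Zm / (Zp + Zm)) * (2 * qp / Zp - 2 * pm / Zm))
    (hvp : vhatp = (2 * pm + That) / Zm)
    (hvm : vhatm = (2 * qp - That) / Zp)
    (hphatp : phatp = (Zp * vhatp - That) / 2)
    (hqhatm : qhatm = (Zm * vhatm + That) / 2) :
    (1 / Zp) * (qp ^ 2 - phatp ^ 2) + (1 / Zm) * (pm ^ 2 - qhatm ^ 2)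
      = That * (vhatp - vhatm) ∧
    That * (vhatp - vhatm) = 0 :=
  locked_interface_energy_term_vanishes_general Zp Zm hZp hZm qp pm That vhatp vhatm phatp qhatm hT
    hvp hvm hphatp hqhatm
end
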